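/- Let f : ℝ → ℝ be bounded and β-Hölder continuous for some β ∈ (0, 1], with Hölder seminorm [f]_β = sup_{x ≠ y} |f(x) − f(y)|/|x − y|^β. Let P_t f(x) = ∫_ℝ h_t(x − y) f(y) dy with h_t the heat kernel. Then there is a constant C = C(β) such that for all t > 0 and x ∈ ℝ, |∂_x² P_t f(x)| ≤ C [f]_β t^{β/2 − 1}. -/

import Mathlib

open Real MeasureTheory Filter Metric Topology

/-- The one-dimensional heat kernel `h_t(x) = (2πt)^{-1/2} exp(-x²/(2t))`. -/
noncomputable def heatKer (t x : ℝ) : ℝ :=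
  (Real.sqrt (2 * Real.pi * t))⁻¹ * Real.exp (-x ^ 2 / (2 * t))

/-- First derivative of the heat kernel in the space variable. -/
noncomputable def hk1 (t u : ℝ) : ℝ := (-(u / t)) * heatKer t u

/-- Second derivative of the heat kernel in the space variable. -/
noncomputable def hk2 (t u : ℝ) : ℝ := (u ^ 2 / t ^ 2 - 1 / t) * heatKer t u

lemma heatKer_continuous (t : ℝ) : Continuous (heatKer t) := by
  unfold heatKer; fun_prop

lemma hk1_continuous (t : ℝ) : Continuous (hk1 t) := by
  unfold hk1 heatKer; fun_prop

lemma hk2_continuous (t : ℝ) : Continuous (hk2 t) := by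
  unfold hk2 heatKer; fun_prop

lemma heatKer_hasDeriv {t : ℝ} (ht : 0 < t) (u : ℝ) :
    HasDerivAt (heatKer t) (hk1 t u) u := by
  have h1 : HasDerivAt (fun x : ℝ => -x ^ 2 / (2 * t)) (-(2 * u) / (2 * t)) u := by
    simpa using ((hasDerivAt_pow 2 u).neg.div_const (2 * t))
  have h2 := (h1.exp).const_mul ((Real.sqrt (2 * Real.pi * t))⁻¹)
  refine h2.congr_deriv ?_
  unfold hk1 heatKer
  field_simp

lemma hk1_hasDeriv {t : ℝ} (ht : 0 < t) (u : ℝ) :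
    HasDerivAt (hk1 t) (hk2 t u) u := by
  have h1 : HasDerivAt (fun v : ℝ => -(v / t)) (-(1 / t)) u := by
    exact ((hasDerivAt_id u).div_const t).neg
  have h2 := h1.mul (heatKer_hasDeriv ht u)
  refine h2.congr_deriv ?_
  unfold hk1 hk2 heatKer
  field_simp
  ring

lemma key_ineq {s : ℝ} (hs : 0 ≤ s) : s ≤ Real.exp (s / 2) := by
  have h3 : (2 : ℝ) ≤ Real.exp 1 := by
    have := Real.add_one_le_exp 1; linarith
  have h4 : s / 2 * Real.exp 1 ≤ Real.exp (s / 2) := by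
    have h := Real.add_one_le_exp (s / 2 - 1)
    have h5 : Real.exp (s / 2 - 1) * Real.exp 1 = Real.exp (s / 2) := by
      rw [← Real.exp_add]; ring_nf
    nlinarith [Real.exp_pos 1]
  nlinarith

lemma mul_exp_le {s : ℝ} (hs : 0 ≤ s) : s * Real.exp (-s) ≤ Real.exp (-(s / 2)) := by
  have h := key_ineq hs
  calc s * Real.exp (-s) ≤ Real.exp (s / 2) * Real.exp (-s) :=
        mul_le_mul_of_nonneg_right h (Real.exp_pos _).le
    _ = Real.exp (-(s / 2)) := by rw [← Real.exp_add]; ring_nf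

lemma poly_exp_le {s : ℝ} (hs : 0 ≤ s) :
    (2 * s + 1) * Real.exp (-s) ≤ 3 * Real.exp (-(s / 2)) := by
  have h1 := mul_exp_le hs
  have h2 : Real.exp (-s) ≤ Real.exp (-(s / 2)) := Real.exp_le_exp.mpr (by linarith)
  nlinarith [Real.exp_pos (-s)]

lemma poly_exp_le' {s : ℝ} (hs : 0 ≤ s) :
    (s + 1) * Real.exp (-s) ≤ 2 * Real.exp (-(s / 2)) := by
  have h1 := mul_exp_le hs
  have h2 : Real.exp (-s) ≤ Real.exp (-(s / 2)) := Real.exp_le_exp.mpr (by linarith)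
  nlinarith [Real.exp_pos (-s)]

lemma heatKer_bound {t : ℝ} (ht : 0 < t) (u : ℝ) :
    |heatKer t u| ≤ (Real.sqrt (2 * Real.pi * t))⁻¹ * Real.exp (-u ^ 2 / (4 * t)) := by
  unfold heatKer
  rw [abs_mul, abs_of_nonneg (by positivity), abs_of_nonneg (Real.exp_pos _).le]
  have : Real.exp (-u ^ 2 / (2 * t)) ≤ Real.exp (-u ^ 2 / (4 * t)) := by
    apply Real.exp_le_exp.mpr
    rw [div_le_div_iff₀ (by positivity) (by positivity)]
    nlinarith [sq_nonneg u]
  exact mul_le_mul_of_nonneg_left this (by positivity)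

lemma hk1_bound {t : ℝ} (ht : 0 < t) (u : ℝ) :
    |hk1 t u| ≤ 2 / Real.sqrt t * (Real.sqrt (2 * Real.pi * t))⁻¹ *
      Real.exp (-u ^ 2 / (4 * t)) := by
  have hst : 0 < Real.sqrt t := Real.sqrt_pos.mpr ht
  set s : ℝ := u ^ 2 / (2 * t) with hs_def
  have hs : 0 ≤ s := by positivity
  have habs : |hk1 t u| = |u| / t * ((Real.sqrt (2 * Real.pi * t))⁻¹ * Real.exp (-s)) := by
    rw [hs_def]
    unfold hk1 heatKer
    rw [abs_mul, abs_neg, abs_div, abs_of_nonneg ht.le,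
      abs_of_nonneg (by positivity : (0:ℝ) ≤ (Real.sqrt (2 * Real.pi * t))⁻¹ *
        Real.exp (-u ^ 2 / (2 * t))), neg_div]
  have h1 : |u| / t ≤ (s + 1) / Real.sqrt t := by
    rw [div_le_div_iff₀ ht hst]
    have hsq : Real.sqrt t * Real.sqrt t = t := Real.mul_self_sqrt ht.le
    have h2 : |u| * |u| = u ^ 2 := by rw [← sq, sq_abs]
    have hst2 : s * t = u ^ 2 / 2 := by rw [hs_def]; field_simp
    nlinarith [sq_nonneg (|u| - Real.sqrt t), abs_nonneg u, hsq, h2, hst2]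
  have h3 : (s + 1) * Real.exp (-s) ≤ 2 * Real.exp (-(s / 2)) := poly_exp_le' hs
  have hexp : Real.exp (-(s / 2)) = Real.exp (-u ^ 2 / (4 * t)) := by
    congr 1; rw [hs_def]; ring
  rw [habs]
  calc |u| / t * ((Real.sqrt (2 * Real.pi * t))⁻¹ * Real.exp (-s))
      ≤ (s + 1) / Real.sqrt t * ((Real.sqrt (2 * Real.pi * t))⁻¹ * Real.exp (-s)) := by
        apply mul_le_mul_of_nonneg_right h1 (by positivity)
    _ = (Real.sqrt t)⁻¹ * (Real.sqrt (2 * Real.pi * t))⁻¹ * ((s + 1) * Real.exp (-s)) := by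
        ring
    _ ≤ (Real.sqrt t)⁻¹ * (Real.sqrt (2 * Real.pi * t))⁻¹ * (2 * Real.exp (-(s / 2))) := by
        apply mul_le_mul_of_nonneg_left h3 (by positivity)
    _ = 2 / Real.sqrt t * (Real.sqrt (2 * Real.pi * t))⁻¹ * Real.exp (-(s / 2)) := by ring
    _ = 2 / Real.sqrt t * (Real.sqrt (2 * Real.pi * t))⁻¹ * Real.exp (-u ^ 2 / (4 * t)) := by
        rw [hexp]

lemma hk2_bound {t : ℝ} (ht : 0 < t) (u : ℝ) :
    |hk2 t u| ≤ 3 / t * (Real.sqrt (2 * Real.pi * t))⁻¹ * Real.exp (-u ^ 2 / (4 * t)) := by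
  set s : ℝ := u ^ 2 / (2 * t) with hs_def
  have hs : 0 ≤ s := by positivity
  have habs : |hk2 t u| = |u ^ 2 / t ^ 2 - 1 / t| *
      ((Real.sqrt (2 * Real.pi * t))⁻¹ * Real.exp (-s)) := by
    rw [hs_def]
    unfold hk2 heatKer
    rw [abs_mul, abs_of_nonneg (by positivity : (0:ℝ) ≤ (Real.sqrt (2 * Real.pi * t))⁻¹ *
      Real.exp (-u ^ 2 / (2 * t))), neg_div]
  have he : u ^ 2 / t ^ 2 = 2 * s / t := by rw [hs_def]; field_simp
  have h1 : |u ^ 2 / t ^ 2 - 1 / t| ≤ (2 * s + 1) / t := by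
    have e2 : (2 * s + 1) / t = 2 * (s / t) + 1 / t := by ring
    have e3 : 2 * s / t = 2 * (s / t) := by ring
    have hs3 : 0 ≤ s / t := by positivity
    have h1t : 0 < 1 / t := by positivity
    rw [abs_le]
    constructor
    · rw [he, e2, e3]; linarith
    · rw [he, e2, e3]; linarith
  have h3 := poly_exp_le hs
  have hexp : Real.exp (-(s / 2)) = Real.exp (-u ^ 2 / (4 * t)) := by
    congr 1; rw [hs_def]; ring
  rw [habs]
  calc |u ^ 2 / t ^ 2 - 1 / t| * ((Real.sqrt (2 * Real.pi * t))⁻¹ * Real.exp (-s))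
      ≤ (2 * s + 1) / t * ((Real.sqrt (2 * Real.pi * t))⁻¹ * Real.exp (-s)) :=
        mul_le_mul_of_nonneg_right h1 (by positivity)
    _ = t⁻¹ * (Real.sqrt (2 * Real.pi * t))⁻¹ * ((2 * s + 1) * Real.exp (-s)) := by ring
    _ ≤ t⁻¹ * (Real.sqrt (2 * Real.pi * t))⁻¹ * (3 * Real.exp (-(s / 2))) :=
        mul_le_mul_of_nonneg_left h3 (by positivity)
    _ = 3 / t * (Real.sqrt (2 * Real.pi * t))⁻¹ * Real.exp (-u ^ 2 / (4 * t)) := by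
        rw [hexp]; ring

lemma gauss_shift {t : ℝ} (ht : 0 < t) {x z : ℝ} (hz : |z - x| ≤ 1) (y : ℝ) :
    Real.exp (-(z - y) ^ 2 / (4 * t)) ≤
      Real.exp ((4 * t)⁻¹) * Real.exp (-(x - y) ^ 2 / (8 * t)) := by
  rw [← Real.exp_add]
  apply Real.exp_le_exp.mpr
  have hz2 : (z - x) ^ 2 ≤ 1 := by
    have := abs_nonneg (z - x)
    nlinarith [sq_abs (z - x)]
  have h2 : (x - y) ^ 2 ≤ 2 + 2 * (z - y) ^ 2 := by
    nlinarith [sq_nonneg ((x - z) - (z - y))]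
  have key : (4 * t)⁻¹ + -(x - y) ^ 2 / (8 * t) - (-(z - y) ^ 2 / (4 * t)) =
      (2 + 2 * (z - y) ^ 2 - (x - y) ^ 2) / (8 * t) := by
    field_simp; ring
  have pos : 0 ≤ (2 + 2 * (z - y) ^ 2 - (x - y) ^ 2) / (8 * t) :=
    div_nonneg (by linarith) (by positivity)
  linarith

lemma integrable_gauss0 {a : ℝ} (ha : 0 < a) :
    Integrable (fun y : ℝ => Real.exp (-y ^ 2 / a)) := by
  have h : (fun y : ℝ => Real.exp (-y ^ 2 / a)) =
      fun y => Real.exp (-a⁻¹ * y ^ 2) := by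
    funext y; congr 1; field_simp
  rw [h]
  exact integrable_exp_neg_mul_sq (inv_pos.mpr ha)

lemma integrable_abs_rpow_gauss {b β : ℝ} (hb : 0 < b) (hβ : -1 < β) :
    Integrable (fun y : ℝ => |y| ^ β * Real.exp (-b * y ^ 2)) := by
  have base : IntegrableOn (fun x : ℝ => |x| ^ β * Real.exp (-b * x ^ 2)) (Set.Ioi 0) :=
    (integrableOn_rpow_mul_exp_neg_mul_sq hb hβ).congr_fun
      (fun x hx => by rw [abs_of_pos hx]) measurableSet_Ioi
  rw [← integrableOn_univ, ← Set.Iio_union_Ici (a := (0:ℝ)), integrableOn_union,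
    integrableOn_Ici_iff_integrableOn_Ioi]
  refine ⟨?_, base⟩
  rw [← (Measure.measurePreserving_neg (volume : Measure ℝ)).integrableOn_comp_preimage
      (Homeomorph.neg ℝ).measurableEmbedding]
  simp only [Function.comp_def, neg_sq, Set.neg_preimage, Set.neg_Iio, neg_neg, neg_zero, abs_neg]
  exact base

lemma integrable_gauss0_rpow {a β : ℝ} (ha : 0 < a) (hβ : -1 < β) :
    Integrable (fun y : ℝ => |y| ^ β * Real.exp (-y ^ 2 / a)) := by
  have h : (fun y : ℝ => |y| ^ β * Real.exp (-y ^ 2 / a)) =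
      fun y => |y| ^ β * Real.exp (-a⁻¹ * y ^ 2) := by
    funext y; congr 2; field_simp
  rw [h]
  exact integrable_abs_rpow_gauss (inv_pos.mpr ha) hβ

lemma integrable_hk2 {t : ℝ} (ht : 0 < t) : Integrable (hk2 t) := by
  apply Integrable.mono'
    (((integrable_gauss0 (by positivity : (0:ℝ) < 4 * t)).const_mul
      (3 / t * (Real.sqrt (2 * Real.pi * t))⁻¹)))
    (hk2_continuous t).aestronglyMeasurable
  filter_upwards with u
  rw [Real.norm_eq_abs]
  exact hk2_bound ht u

lemma tendsto_mul_gauss_top {b : ℝ} (hb : 0 < b) :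
    Tendsto (fun u : ℝ => u * Real.exp (-b * u ^ 2)) atTop (𝓝 0) := by
  have o := rpow_mul_exp_neg_mul_sq_isLittleO_exp_neg hb 1
  have hexp : Tendsto (fun x : ℝ => Real.exp (-(1 / 2) * x)) atTop (𝓝 0) := by
    have h1 : Tendsto (fun x : ℝ => x / 2) atTop atTop :=
      tendsto_id.atTop_div_const two_pos
    have := Real.tendsto_exp_neg_atTop_nhds_zero.comp h1
    refine this.congr fun x => ?_
    simp only [Function.comp_apply]
    ring_nf
  have T := o.tendsto_zero_of_tendsto hexp
  refine T.congr fun x => ?_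
  rw [Real.rpow_one]

lemma tendsto_mul_gauss_bot {b : ℝ} (hb : 0 < b) :
    Tendsto (fun u : ℝ => u * Real.exp (-b * u ^ 2)) atBot (𝓝 0) := by
  have T := (tendsto_mul_gauss_top hb).neg
  rw [neg_zero] at T
  have := T.comp tendsto_neg_atBot_atTop
  refine this.congr fun x => ?_
  simp only [Function.comp_apply]
  ring_nf

lemma tendsto_hk1_top {t : ℝ} (ht : 0 < t) : Tendsto (hk1 t) atTop (𝓝 0) := by
  have hb : 0 < (2 * t)⁻¹ := by positivity
  have T := ((tendsto_mul_gauss_top hb).const_mul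
    (-(Real.sqrt (2 * Real.pi * t))⁻¹ / t))
  rw [mul_zero] at T
  refine T.congr fun u => ?_
  unfold hk1 heatKer
  have : -u ^ 2 / (2 * t) = -(2 * t)⁻¹ * u ^ 2 := by field_simp
  rw [this]; ring

lemma tendsto_hk1_bot {t : ℝ} (ht : 0 < t) : Tendsto (hk1 t) atBot (𝓝 0) := by
  have hb : 0 < (2 * t)⁻¹ := by positivity
  have T := ((tendsto_mul_gauss_bot hb).const_mul
    (-(Real.sqrt (2 * Real.pi * t))⁻¹ / t))
  rw [mul_zero] at T
  refine T.congr fun u => ?_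
  unfold hk1 heatKer
  have : -u ^ 2 / (2 * t) = -(2 * t)⁻¹ * u ^ 2 := by field_simp
  rw [this]; ring

lemma integral_hk2_zero {t : ℝ} (ht : 0 < t) : ∫ u : ℝ, hk2 t u = 0 := by
  have hint := integrable_hk2 ht
  have h10 : hk1 t 0 = 0 := by unfold hk1; simp
  have h1 : ∫ u in Set.Ioi (0:ℝ), hk2 t u = 0 - hk1 t 0 :=
    integral_Ioi_of_hasDerivAt_of_tendsto' (fun u _ => hk1_hasDeriv ht u)
      hint.integrableOn (tendsto_hk1_top ht)
  have h2 : ∫ u in Set.Iic (0:ℝ), hk2 t u = hk1 t 0 - 0 :=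
    integral_Iic_of_hasDerivAt_of_tendsto' (fun u _ => hk1_hasDeriv ht u)
      hint.integrableOn (tendsto_hk1_bot ht)
  have h3 := intervalIntegral.integral_Iic_add_Ioi (b := (0:ℝ)) hint.integrableOn hint.integrableOn
  rw [← h3, h1, h2, h10]
  ring

/-- Generic integrability of a Gaussian-dominated kernel against a bounded function. -/
lemma conv_integrable {t : ℝ} (ht : 0 < t) {g : ℝ → ℝ} (hgc : Continuous g) {B : ℝ}
    (hbnd : ∀ u, |g u| ≤ B * Real.exp (-u ^ 2 / (4 * t)))
    {f : ℝ → ℝ} (hfc : Continuous f) {M : ℝ} (hM : ∀ x, |f x| ≤ M) (x₀ : ℝ) :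
    Integrable (fun y => g (x₀ - y) * f y) := by
  have hMn : 0 ≤ M := le_trans (abs_nonneg _) (hM 0)
  apply Integrable.mono'
    (((integrable_gauss0 (by positivity : (0:ℝ) < 4 * t)).comp_sub_left x₀).const_mul (B * M))
    ((hgc.comp (continuous_const.sub continuous_id)).mul hfc).aestronglyMeasurable
  filter_upwards with y
  change ‖g (x₀ - y) * f y‖ ≤ _
  rw [Real.norm_eq_abs, abs_mul]
  have h1 := hbnd (x₀ - y)
  have h2 := hM y
  have hB : 0 ≤ B := by
    have h := hbnd 0
    have h0 := abs_nonneg (g 0)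
    norm_num at h
    linarith
  calc |g (x₀ - y)| * |f y| ≤ (B * Real.exp (-(x₀ - y) ^ 2 / (4 * t))) * M := by
        apply mul_le_mul h1 h2 (abs_nonneg _) (by positivity)
    _ = B * M * Real.exp (-(x₀ - y) ^ 2 / (4 * t)) := by ring

/-- Differentiation under the integral sign for Gaussian-dominated kernels. -/
lemma deriv_under {t : ℝ} (ht : 0 < t) {g g' : ℝ → ℝ}
    (hg : ∀ u, HasDerivAt g (g' u) u) (hgc : Continuous g) (hg'c : Continuous g')
    {B : ℝ} (hbnd : ∀ u, |g' u| ≤ B * Real.exp (-u ^ 2 / (4 * t)))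
    {f : ℝ → ℝ} (hfc : Continuous f) {M : ℝ} (hM : ∀ x, |f x| ≤ M)
    (x₀ : ℝ) (hint : Integrable (fun y => g (x₀ - y) * f y)) :
    HasDerivAt (fun z => ∫ y : ℝ, g (z - y) * f y) (∫ y : ℝ, g' (x₀ - y) * f y) x₀ := by
  have hMn : 0 ≤ M := le_trans (abs_nonneg _) (hM 0)
  have hB : 0 ≤ B := by
    have h := hbnd 0
    have h0 := abs_nonneg (g' 0)
    norm_num at h
    linarith
  have key := hasDerivAt_integral_of_dominated_loc_of_deriv_le
    (F := fun z y => g (z - y) * f y) (F' := fun z y => g' (z - y) * f y)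
    (x₀ := x₀) (s := ball x₀ 1) (μ := (volume : Measure ℝ))
    (bound := fun y => M * B * Real.exp ((4 * t)⁻¹) * Real.exp (-(x₀ - y) ^ 2 / (8 * t)))
    (ball_mem_nhds x₀ one_pos)
    (Eventually.of_forall fun z =>
      ((hgc.comp (continuous_const.sub continuous_id)).mul hfc).aestronglyMeasurable)
    hint
    ((hg'c.comp (continuous_const.sub continuous_id)).mul hfc).aestronglyMeasurable
    ?_ ?_ ?_
  · exact key.2
  · filter_upwards with y
    intro z hz
    have hz1 : |z - x₀| ≤ 1 := by
      rw [mem_ball, Real.dist_eq] at hz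
      exact hz.le
    rw [Real.norm_eq_abs, abs_mul]
    calc |g' (z - y)| * |f y|
        ≤ (B * Real.exp (-(z - y) ^ 2 / (4 * t))) * M :=
          mul_le_mul (hbnd _) (hM y) (abs_nonneg _) (by positivity)
      _ ≤ (B * (Real.exp ((4 * t)⁻¹) * Real.exp (-(x₀ - y) ^ 2 / (8 * t)))) * M := by
          apply mul_le_mul_of_nonneg_right _ hMn
          exact mul_le_mul_of_nonneg_left (gauss_shift ht hz1 y) hB
      _ = M * B * Real.exp ((4 * t)⁻¹) * Real.exp (-(x₀ - y) ^ 2 / (8 * t)) := by ring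
  · exact ((integrable_gauss0 (by positivity : (0:ℝ) < 8 * t)).comp_sub_left x₀).const_mul
      (M * B * Real.exp ((4 * t)⁻¹))
  · filter_upwards with y
    intro z hz
    have h := ((hg (z - y)).comp z ((hasDerivAt_id z).sub_const y)).mul_const (f y)
    simpa using h

/-- Second-order smoothing of the heat semigroup on Hölder functions: for
`β ∈ (0,1]` there is `C = C(β)` such that, for any bounded `β`-Hölder `f` with
seminorm `K`, `|∂_x² P_t f(x)| ≤ C K t^{β/2 - 1}` for all `t > 0`, `x ∈ ℝ`. -/
theorem stmt_8 (β : ℝ) (hβ0 : 0 < β) (hβ1 : β ≤ 1) :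
    ∃ C : ℝ, 0 < C ∧
      ∀ f : ℝ → ℝ, (∃ M : ℝ, ∀ x, |f x| ≤ M) →
        ∀ K : ℝ, 0 ≤ K → (∀ x y : ℝ, |f x - f y| ≤ K * |x - y| ^ β) →
          ∀ t : ℝ, 0 < t → ∀ x : ℝ,
            |deriv (deriv (fun z : ℝ => ∫ y : ℝ, heatKer t (z - y) * f y)) x|
              ≤ C * K * t ^ (β / 2 - 1) := by
  set I : ℝ := ∫ v : ℝ, |v| ^ β * Real.exp (-v ^ 2 / 4) with hI_def
  have hI : 0 ≤ I := integral_nonneg fun v => by positivity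
  refine ⟨3 * I / Real.sqrt (2 * Real.pi) + 1, by positivity, ?_⟩
  rintro f ⟨M, hM⟩ K hK hHol t ht x
  have hMn : 0 ≤ M := le_trans (abs_nonneg _) (hM 0)
  have hβ' : (-1:ℝ) < β := by linarith
  -- f is continuous
  have hfc : Continuous f := by
    rw [continuous_iff_continuousAt]
    intro x₀
    rw [ContinuousAt, tendsto_iff_dist_tendsto_zero]
    have hb : Tendsto (fun y : ℝ => K * |y - x₀| ^ β) (nhds x₀) (nhds 0) := by
      have h1 : Tendsto (fun y : ℝ => |y - x₀|) (nhds x₀) (nhds 0) := by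
        have h0 : Tendsto (fun y : ℝ => y - x₀) (nhds x₀) (nhds (x₀ - x₀)) :=
          (continuous_id.sub continuous_const).tendsto x₀
        rw [sub_self] at h0
        simpa using h0.abs
      have h2 : Tendsto (fun r : ℝ => r ^ β) (nhds 0) (nhds 0) := by
        have hc := Real.continuousAt_rpow_const 0 β (Or.inr hβ0.le)
        have h0 : (0:ℝ) ^ β = 0 := Real.zero_rpow (ne_of_gt hβ0)
        simpa [ContinuousAt, h0] using hc
      have := (h2.comp h1).const_mul K
      simpa using this
    apply squeeze_zero (fun y => dist_nonneg) _ hb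
    intro y
    rw [Real.dist_eq]
    exact hHol y x₀
  -- first derivative
  have D1 : ∀ x₀ : ℝ, HasDerivAt (fun z => ∫ y : ℝ, heatKer t (z - y) * f y)
      (∫ y : ℝ, hk1 t (x₀ - y) * f y) x₀ := by
    intro x₀
    apply deriv_under ht (heatKer_hasDeriv ht) (heatKer_continuous t) (hk1_continuous t)
      (hk1_bound ht) hfc hM x₀
    exact conv_integrable ht (heatKer_continuous t) (heatKer_bound ht) hfc hM x₀
  have D2 : HasDerivAt (fun z => ∫ y : ℝ, hk1 t (z - y) * f y)
      (∫ y : ℝ, hk2 t (x - y) * f y) x := by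
    apply deriv_under ht (hk1_hasDeriv ht) (hk1_continuous t) (hk2_continuous t)
      (hk2_bound ht) hfc hM x
    exact conv_integrable ht (hk1_continuous t) (hk1_bound ht) hfc hM x
  have hd1 : deriv (fun z : ℝ => ∫ y : ℝ, heatKer t (z - y) * f y) =
      fun z => ∫ y : ℝ, hk1 t (z - y) * f y := funext fun z => (D1 z).deriv
  have hd2 : deriv (deriv (fun z : ℝ => ∫ y : ℝ, heatKer t (z - y) * f y)) x =
      ∫ y : ℝ, hk2 t (x - y) * f y := by
    rw [hd1]; exact D2.deriv
  -- the cancellation trick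
  have i1 : Integrable (fun y => hk2 t (x - y) * (f y - f x)) := by
    apply Integrable.mono'
      (((integrable_gauss0_rpow (by positivity : (0:ℝ) < 4 * t) hβ').comp_sub_left x).const_mul
        (3 / t * (Real.sqrt (2 * Real.pi * t))⁻¹ * K))
      (((hk2_continuous t).comp (continuous_const.sub continuous_id)).mul
        (hfc.sub continuous_const)).aestronglyMeasurable
    filter_upwards with y
    change ‖hk2 t (x - y) * (f y - f x)‖ ≤ _
    rw [Real.norm_eq_abs, abs_mul]
    have h1 := hk2_bound ht (x - y)
    have h2 : |f y - f x| ≤ K * |x - y| ^ β := by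
      rw [abs_sub_comm x y]
      exact hHol y x
    calc |hk2 t (x - y)| * |f y - f x|
        ≤ (3 / t * (Real.sqrt (2 * Real.pi * t))⁻¹ * Real.exp (-(x - y) ^ 2 / (4 * t))) * (K * |x - y| ^ β) :=
          mul_le_mul h1 h2 (abs_nonneg _) (by positivity)
      _ = 3 / t * (Real.sqrt (2 * Real.pi * t))⁻¹ * K * (|x - y| ^ β * Real.exp (-(x - y) ^ 2 / (4 * t))) := by ring
  have i2 : Integrable (fun y => hk2 t (x - y)) := (integrable_hk2 ht).comp_sub_left x
  have split : (∫ y : ℝ, hk2 t (x - y) * f y) =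
      (∫ y : ℝ, hk2 t (x - y) * (f y - f x)) + (∫ y : ℝ, hk2 t (x - y)) * f x := by
    rw [← MeasureTheory.integral_mul_const]
    rw [← integral_add i1 (i2.mul_const (f x))]
    congr 1; funext y; ring
  have hzero : (∫ y : ℝ, hk2 t (x - y)) = 0 := by
    rw [integral_sub_left_eq_self (hk2 t) volume x]
    exact integral_hk2_zero ht
  rw [hd2, split, hzero, zero_mul, add_zero]
  -- bound the remaining integral
  have hbnd : |∫ y : ℝ, hk2 t (x - y) * (f y - f x)| ≤
      ∫ y : ℝ, 3 / t * (Real.sqrt (2 * Real.pi * t))⁻¹ * K * (|x - y| ^ β * Real.exp (-(x - y) ^ 2 / (4 * t))) := by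
    rw [← Real.norm_eq_abs]
    apply norm_integral_le_of_norm_le
      (((integrable_gauss0_rpow (by positivity : (0:ℝ) < 4 * t) hβ').comp_sub_left x).const_mul
        (3 / t * (Real.sqrt (2 * Real.pi * t))⁻¹ * K))
    filter_upwards with y
    rw [Real.norm_eq_abs, abs_mul]
    have h1 := hk2_bound ht (x - y)
    have h2 : |f y - f x| ≤ K * |x - y| ^ β := by
      rw [abs_sub_comm x y]; exact hHol y x
    calc |hk2 t (x - y)| * |f y - f x|
        ≤ (3 / t * (Real.sqrt (2 * Real.pi * t))⁻¹ * Real.exp (-(x - y) ^ 2 / (4 * t))) * (K * |x - y| ^ β) :=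
          mul_le_mul h1 h2 (abs_nonneg _) (by positivity)
      _ = 3 / t * (Real.sqrt (2 * Real.pi * t))⁻¹ * K * (|x - y| ^ β * Real.exp (-(x - y) ^ 2 / (4 * t))) := by ring
  -- compute the Gaussian beta-moment by scaling
  have hst : 0 < Real.sqrt t := Real.sqrt_pos.mpr ht
  have hshift : (∫ y : ℝ, |x - y| ^ β * Real.exp (-(x - y) ^ 2 / (4 * t))) =
      ∫ u : ℝ, |u| ^ β * Real.exp (-u ^ 2 / (4 * t)) :=
    integral_sub_left_eq_self (fun u => |u| ^ β * Real.exp (-u ^ 2 / (4 * t))) volume x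
  have hscale : (∫ u : ℝ, |u| ^ β * Real.exp (-u ^ 2 / (4 * t))) =
      Real.sqrt t ^ β * (Real.sqrt t * I) := by
    have h := Measure.integral_comp_mul_left
      (fun v => |v| ^ β * Real.exp (-v ^ 2 / 4)) ((Real.sqrt t)⁻¹)
    have hLHS : (∫ u : ℝ, |(Real.sqrt t)⁻¹ * u| ^ β * Real.exp (-((Real.sqrt t)⁻¹ * u) ^ 2 / 4))
        = (Real.sqrt t ^ β)⁻¹ * ∫ u : ℝ, |u| ^ β * Real.exp (-u ^ 2 / (4 * t)) := by
      rw [← MeasureTheory.integral_const_mul]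
      congr 1; funext u
      have e1 : |(Real.sqrt t)⁻¹ * u| = (Real.sqrt t)⁻¹ * |u| := by
        rw [abs_mul, abs_of_nonneg (by positivity)]
      have e2 : -((Real.sqrt t)⁻¹ * u) ^ 2 / 4 = -u ^ 2 / (4 * t) := by
        have h2 : ((Real.sqrt t)⁻¹) ^ 2 = t⁻¹ := by
          rw [← Real.sqrt_inv, Real.sq_sqrt (by positivity)]
        rw [mul_pow, h2]
        field_simp
      rw [e1, e2, Real.mul_rpow (by positivity) (abs_nonneg u),
        Real.inv_rpow (Real.sqrt_nonneg t)]
      ring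
    rw [hLHS] at h
    rw [inv_inv, smul_eq_mul, abs_of_nonneg hst.le] at h
    have hp : (Real.sqrt t ^ β) ≠ 0 := by positivity
    field_simp at h ⊢
    rw [hI_def]
    simp only [neg_div] at h ⊢
    linarith [h]
  -- final computation
  have hval : (∫ y : ℝ, 3 / t * (Real.sqrt (2 * Real.pi * t))⁻¹ * K * (|x - y| ^ β * Real.exp (-(x - y) ^ 2 / (4 * t))))
      = 3 / t * (Real.sqrt (2 * Real.pi * t))⁻¹ * K * (Real.sqrt t ^ β * (Real.sqrt t * I)) := by
    rw [MeasureTheory.integral_const_mul, hshift, hscale]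
  have hfinal : 3 / t * (Real.sqrt (2 * Real.pi * t))⁻¹ * K * (Real.sqrt t ^ β * (Real.sqrt t * I))
      = 3 * I / Real.sqrt (2 * Real.pi) * K * t ^ (β / 2 - 1) := by
    have hsp : Real.sqrt (2 * Real.pi * t) = Real.sqrt (2 * Real.pi) * Real.sqrt t := by
      rw [Real.sqrt_mul (by positivity)]
    have hrb : Real.sqrt t ^ β = t ^ (β / 2) := by
      rw [Real.sqrt_eq_rpow, ← Real.rpow_mul ht.le]
      congr 1; ring
    have hts : Real.sqrt t * Real.sqrt t = t := Real.mul_self_sqrt ht.le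
    have h1 : Real.sqrt (2 * Real.pi) ≠ 0 := by positivity
    have h2 : Real.sqrt t ≠ 0 := ne_of_gt hst
    have h3 : t ≠ 0 := ne_of_gt ht
    rw [hsp, hrb, Real.rpow_sub ht, Real.rpow_one]
    field_simp
  calc |∫ y : ℝ, hk2 t (x - y) * (f y - f x)| ≤
      ∫ y : ℝ, 3 / t * (Real.sqrt (2 * Real.pi * t))⁻¹ * K *
        (|x - y| ^ β * Real.exp (-(x - y) ^ 2 / (4 * t))) := hbnd
    _ = 3 * I / Real.sqrt (2 * Real.pi) * K * t ^ (β / 2 - 1) := by rw [hval, hfinal]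
    _ ≤ (3 * I / Real.sqrt (2 * Real.pi) + 1) * K * t ^ (β / 2 - 1) := by
        have hp : (0:ℝ) ≤ K * t ^ (β / 2 - 1) := by positivity
        nlinarith [hp]
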